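/- arXiv:1605.02423 — 3 statements merged into one kernel-verified Lean document; each statement's English description precedes it below -/
import Mathlib

section
/- Let D ⊆ F_q with |D| = n and 0 < k < n. If f ∈ F_q[x] has deg f = k, then the word u_f = (f(x))_{x ∈ D} satisfies d(u_f, RS(D,k)) = n - k. -/
open Polynomial Finset

/-- Error distance of a word `u` to a code `C`: minimum Hamming distance to a codeword. -/
noncomputable def errDist {ι F : Type*} [Fintype ι] [DecidableEq F]
    (C : Set (ι → F)) (u : ι → F) : ℕ :=
  sInf (hammingDist u '' C)

/-- Covering radius of a code: maximum error distance over all words. -/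
noncomputable def covRad {ι F : Type*} [Fintype ι] [DecidableEq F]
    (C : Set (ι → F)) : ℕ :=
  sSup (Set.range (errDist C))

/-- Minimum distance of a code: minimum Hamming weight of a nonzero codeword. -/
noncomputable def minDist {ι F : Type*} [Fintype ι] [DecidableEq F] [Zero F]
    (C : Set (ι → F)) : ℕ :=
  sInf (hammingNorm '' (C \ {0}))

/-- Reed-Solomon code: evaluations of polynomials of degree `< k` at the points `x i`. -/
def RSCode (F : Type*) [Field F] {ι : Type*} (x : ι → F) (k : ℕ) : Set (ι → F) :=
  {u | ∃ f : F[X], f.degree < (k : WithBot ℕ) ∧ ∀ i, u i = f.eval (x i)}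

/-- Projective Reed-Solomon code of length `q+1` (words indexed by `Option F`,
with `none` the point at infinity carrying the coefficient of `X^(k-1)`). -/
def PRSCode (F : Type*) [Field F] (k : ℕ) : Set (Option F → F) :=
  {w | ∃ g : F[X], g.degree < (k : WithBot ℕ) ∧
    (∀ a : F, w (some a) = g.eval a) ∧ w none = g.coeff (k - 1)}

lemma card_eval_zero_le {F : Type*} [Field F] [DecidableEq F] {n : ℕ} (x : Fin n → F)
    (hx : Function.Injective x) (p : F[X]) (hp : p ≠ 0) :
    #(Finset.univ.filter fun i : Fin n => p.eval (x i) = 0) ≤ p.natDegree := by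
  classical
  rw [← Finset.card_image_of_injective _ hx]
  calc #((Finset.univ.filter fun i : Fin n => p.eval (x i) = 0).image x)
      ≤ #p.roots.toFinset := by
        apply Finset.card_le_card
        intro a ha
        simp only [Finset.mem_image, Finset.mem_filter, Finset.mem_univ, true_and] at ha
        obtain ⟨i, hi, rfl⟩ := ha
        simp [Multiset.mem_toFinset, Polynomial.mem_roots, hp, Polynomial.IsRoot, hi]
    _ ≤ Multiset.card p.roots := Multiset.toFinset_card_le _
    _ ≤ p.natDegree := p.card_roots'


/-- If `deg f = k`, then `d(u_f, RS(D,k)) = n - k`. -/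
theorem rs_errDist_deg_k {F : Type*} [Field F] [Fintype F] [DecidableEq F] {n k : ℕ}
    (x : Fin n → F) (hx : Function.Injective x) (hk : 0 < k) (hkn : k < n)
    (f : F[X]) (hf : f.natDegree = k) :
    errDist (RSCode F x k) (fun i => f.eval (x i)) = n - k := by
  classical
  set u : Fin n → F := fun i => f.eval (x i) with hu
  have hf0 : f ≠ 0 := fun h => by simp [h] at hf; omega
  have hfdeg : f.degree = (k : WithBot ℕ) := by
    rw [Polynomial.degree_eq_natDegree hf0, hf]
  -- lower bound: every codeword is at distance ≥ n - k
  have hlb : ∀ c ∈ RSCode F x k, (n - k : ℕ) ≤ hammingDist u c := by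
    rintro c ⟨g, hg, hgc⟩
    have hfg0 : f - g ≠ 0 := by
      intro h
      have hfe : f = g := sub_eq_zero.mp h
      rw [← hfe, hfdeg] at hg
      exact lt_irrefl _ hg
    have hdeg : (f - g).natDegree ≤ k := by
      refine Polynomial.natDegree_le_iff_degree_le.mpr
        (le_trans (Polynomial.degree_sub_le f g) ?_)
      rw [hfdeg]; exact max_le le_rfl hg.le
    have hzeros : #(Finset.univ.filter fun i : Fin n => u i = c i) ≤ k := by
      have hset : (Finset.univ.filter fun i : Fin n => u i = c i)
          = Finset.univ.filter fun i : Fin n => (f - g).eval (x i) = 0 := by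
        ext i; simp [hu, hgc, sub_eq_zero]
      rw [hset]
      exact le_trans (card_eval_zero_le x hx _ hfg0) hdeg
    have hsplit := Finset.card_filter_add_card_filter_not
      (s := (Finset.univ : Finset (Fin n))) (p := fun i : Fin n => u i = c i)
    simp only [Finset.card_univ, Fintype.card_fin] at hsplit
    have hdist : hammingDist u c = #(Finset.univ.filter fun i : Fin n => ¬ u i = c i) := by
      simp [hammingDist, Finset.filter_congr_decidable]
    omega
  -- construct the interpolant
  set e : Fin k → Fin n := fun j => ⟨j, lt_trans j.isLt hkn⟩ with he
  have he_inj : Function.Injective e := by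
    intro a b hab
    exact Fin.ext (by simpa [he] using congrArg Fin.val hab)
  have hei : Function.Injective (x ∘ e) := hx.comp he_inj
  set s : Finset F := Finset.univ.image (x ∘ e) with hs
  have hscard : #s = k := by
    rw [hs, Finset.card_image_of_injective _ hei, Finset.card_univ, Fintype.card_fin]
  set g : F[X] := Lagrange.interpolate s id (fun a => f.eval a) with hgdef
  have hinj : Set.InjOn (id : F → F) s := Function.injective_id.injOn
  have hgdeg : g.degree < (k : WithBot ℕ) := by
    have := Lagrange.degree_interpolate_lt (fun a => f.eval a) hinj
    rwa [hscard] at this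
  have hgeval : ∀ a ∈ s, g.eval a = f.eval a := fun a ha =>
    Lagrange.eval_interpolate_at_node _ hinj ha
  set c : Fin n → F := fun i => g.eval (x i) with hc
  have hcmem : c ∈ RSCode F x k := ⟨g, hgdeg, fun i => rfl⟩
  have hub : hammingDist u c ≤ n - k := by
    have hsub : (Finset.univ.filter fun i : Fin n => u i ≠ c i)
        ⊆ Finset.univ.filter fun i : Fin n => k ≤ (i : ℕ) := by
      intro i hi
      simp only [Finset.mem_filter, Finset.mem_univ, true_and] at hi ⊢
      by_contra hik
      push_neg at hik
      apply hi
      have hxi : x i ∈ s := by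
        rw [hs]
        exact Finset.mem_image.mpr ⟨⟨i, hik⟩, Finset.mem_univ _, by simp [he]⟩
      simp [hu, hc, hgeval _ hxi]
    have hcard : #(Finset.univ.filter fun i : Fin n => k ≤ (i : ℕ)) = n - k := by
      have hsplit := Finset.card_filter_add_card_filter_not
        (s := (Finset.univ : Finset (Fin n))) (p := fun i : Fin n => k ≤ (i : ℕ))
      have hlt : #(Finset.univ.filter fun i : Fin n => ¬ k ≤ (i : ℕ)) = k := by
        have himg : (Finset.univ.filter fun i : Fin n => ¬ k ≤ (i : ℕ))
            = Finset.univ.image e := by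
          ext i
          simp only [Finset.mem_filter, Finset.mem_univ, true_and, Finset.mem_image, not_le]
          constructor
          · intro h; exact ⟨⟨i, h⟩, by simp [he]⟩
          · rintro ⟨j, rfl⟩; simp [he]
        rw [himg, Finset.card_image_of_injective _ he_inj, Finset.card_univ, Fintype.card_fin]
      simp only [Finset.card_univ, Fintype.card_fin] at hsplit
      omega
    have hdist : hammingDist u c = #(Finset.univ.filter fun i : Fin n => u i ≠ c i) := by
      simp [hammingDist, Finset.filter_congr_decidable]
    rw [hdist]
    exact le_trans (Finset.card_le_card hsub) (le_of_eq hcard)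
  have hmem : (n - k : ℕ) ∈ hammingDist u '' RSCode F x k :=
    ⟨c, hcmem, le_antisymm hub (hlb c hcmem)⟩
  refine le_antisymm (Nat.sInf_le hmem) (le_csInf ⟨_, hmem⟩ ?_)
  rintro d ⟨c', hc', rfl⟩
  exact hlb c' hc'
end

section
/- Let q be odd and 2 ≤ k ≤ q-1. For any polynomial f ∈ F_q[x] of degree exactly k and any v ∈ F_q, the word (u_f, v) ∈ F_q^{q+1} has error distance exactly q - k to the projective Reed-Solomon code PRS(q+1,k). -/
open Polynomial

/-! A codeword of `PRS(q+1,k)` comes from some `g` with `deg g < k`; then `f - g` has degree `k`,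
so `u_f` and `u_g` agree in at most `k` places, giving distance `≥ q - k`.

Conversely, let `c` be the leading coefficient of `f`. For odd `q` every element of `F_q` is the sum
of some `k`-subset `A` of `F_q` (build it from a pair `{x, s - x}` by adding fresh elements, and use
complements for large `k`). Choosing `A` with `c ∑ A = v - f_{k-1}`, the polynomial
`g = f - c ∏_{a ∈ A} (X - a)` has degree `< k` and `X^(k-1)`-coefficient `v`, and its codeword agrees
with `(u_f, v)` exactly on `A` and at infinity. -/

open Finset

section HammingDist
variable {ι β : Type*} [Fintype ι] [DecidableEq β]

theorem hammingDist_optionElim (v w : β) (x y : ι → β) :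
    hammingDist (fun o : Option ι => o.elim v x) (fun o => o.elim w y) =
      (if v = w then 0 else 1) + hammingDist x y := by
  simp only [hammingDist, card_filter, Fintype.sum_option, Option.elim_none, Option.elim_some,
    ne_eq, ite_not]
  rfl

theorem errDist_eq_of_mem_of_forall_le {C : Set (ι → β)} {u w : ι → β} {d : ℕ}
    (hw : w ∈ C) (hd : hammingDist u w = d) (h : ∀ w' ∈ C, d ≤ hammingDist u w') :
    errDist C u = d :=
  IsLeast.csInf_eq ⟨⟨w, hw, hd⟩, by rintro _ ⟨w', hw', rfl⟩; exact h w' hw'⟩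

end HammingDist

section FiniteField
variable {F : Type*} [Field F] [Fintype F] [DecidableEq F]

omit [DecidableEq F] in
theorem two_ne_zero_of_odd_card (hq : Odd (Fintype.card F)) : (2 : F) ≠ 0 :=
  Ring.two_ne_zero fun h => by
    have := FiniteField.even_card_of_char_two h
    rw [Nat.odd_iff] at hq
    omega

omit [DecidableEq F] in
theorem sum_univ_eq_zero_of_odd_card (hq : Odd (Fintype.card F)) : ∑ x : F, x = 0 := by
  have hq1 : 1 < Fintype.card F := Fintype.one_lt_card (α := F)
  have h3 : 1 < Fintype.card F - 1 := by obtain ⟨m, hm⟩ := hq; omega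
  simpa using FiniteField.sum_pow_lt_card_sub_one F 1 h3

theorem hammingDist_eval_eq_hammingNorm_eval_sub (f g : F[X]) :
    hammingDist (fun a => f.eval a) (fun a => g.eval a) = hammingNorm fun a => (f - g).eval a := by
  simp only [hammingDist, hammingNorm, eval_sub, sub_ne_zero]

theorem card_sub_natDegree_le_hammingNorm_eval {p : F[X]} (hp : p ≠ 0) :
    Fintype.card F - p.natDegree ≤ hammingNorm fun a => p.eval a := by
  have hroots : ({a | p.eval a ≠ 0} : Finset F) = p.roots.toFinsetᶜ := by
    ext a; simp [mem_roots hp]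
  rw [hammingNorm, hroots, card_compl]
  exact Nat.sub_le_sub_left (card_le_degree_of_subset_roots (by simp)) _

theorem hammingNorm_eval_C_mul_prod_X_sub_C {c : F} (hc : c ≠ 0) (A : Finset F) :
    (hammingNorm fun a => (C c * ∏ b ∈ A, (X - C b)).eval a) = Fintype.card F - #A := by
  have hsupp : ({a | (C c * ∏ b ∈ A, (X - C b)).eval a ≠ 0} : Finset F) = Aᶜ := by
    ext a; simp [eval_prod, prod_eq_zero_iff, sub_eq_zero, hc]
  rw [hammingNorm, hsupp, card_compl]

theorem exists_card_eq_two_disjoint_sum_eq (h2 : (2 : F) ≠ 0) (E : Finset F) (s : F)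
    (hE : 2 * #E + 1 < Fintype.card F) :
    ∃ A : Finset F, #A = 2 ∧ Disjoint A E ∧ ∑ a ∈ A, a = s := by
  -- `x` must avoid `E`, the partners `s - E` of `E`, and the fixed point `s / 2` of `x ↦ s - x`.
  set bad := E ∪ E.image (s - ·) ∪ {s / 2}
  have hbad : #bad < #(univ : Finset F) := calc
    #bad ≤ #E + #(E.image (s - ·)) + 1 := (card_union_le _ _).trans (by grw [card_union_le]; simp)
    _ ≤ 2 * #E + 1 := by grw [card_image_le]; omega
    _ < #univ := by rwa [card_univ]
  obtain ⟨x, -, hx⟩ := exists_mem_notMem_of_card_lt_card hbad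
  simp only [bad, mem_union, mem_image, mem_singleton, not_or, not_exists, not_and] at hx
  obtain ⟨⟨hxE, hsxE⟩, hx2⟩ := hx
  have hne : x ≠ s - x := fun h => hx2 (by field_simp; linear_combination h)
  refine ⟨{x, s - x}, card_pair hne, ?_, by rw [sum_pair hne]; ring⟩
  rw [disjoint_insert_left, disjoint_singleton_left]
  exact ⟨hxE, fun h => hsxE _ h (sub_sub_cancel s x)⟩

theorem exists_card_eq_disjoint_sum_eq (h2 : (2 : F) ≠ 0) {k : ℕ} (hk : 2 ≤ k) (E : Finset F)
    (s : F) (hE : 2 * k + 2 * #E ≤ Fintype.card F + 1) :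
    ∃ A : Finset F, #A = k ∧ Disjoint A E ∧ ∑ a ∈ A, a = s := by
  induction k, hk using Nat.le_induction generalizing E s with
  | base => exact exists_card_eq_two_disjoint_sum_eq h2 E s (by omega)
  | succ k hk ih =>
    have hE' : #E < #(univ : Finset F) := by rw [card_univ]; omega
    obtain ⟨b, -, hb⟩ := exists_mem_notMem_of_card_lt_card hE'
    obtain ⟨A, hA, hAE, hAs⟩ := ih (insert b E) (s - b) (by rw [card_insert_of_notMem hb]; omega)
    rw [disjoint_insert_right] at hAE
    refine ⟨insert b A, by rw [card_insert_of_notMem hAE.1, hA], ?_, ?_⟩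
    · exact disjoint_insert_left.2 ⟨hb, hAE.2⟩
    · rw [sum_insert hAE.1, hAs]; ring

theorem exists_card_eq_sum_eq (hq : Odd (Fintype.card F)) {k : ℕ} (hk1 : 1 ≤ k)
    (hk : k ≤ Fintype.card F - 1) (s : F) : ∃ A : Finset F, #A = k ∧ ∑ a ∈ A, a = s := by
  have h2 := two_ne_zero_of_odd_card hq
  have small : ∀ m t, 1 ≤ m → 2 * m ≤ Fintype.card F + 1 →
      ∃ A : Finset F, #A = m ∧ ∑ a ∈ A, a = t := by
    intro m t hm1 hm
    obtain rfl | hm2 := hm1.eq_or_lt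
    · exact ⟨{t}, card_singleton t, sum_singleton _ _⟩
    · obtain ⟨A, hA, -, hAt⟩ := exists_card_eq_disjoint_sum_eq h2 hm2 ∅ t (by simpa using hm)
      exact ⟨A, hA, hAt⟩
  by_cases hk' : 2 * k ≤ Fintype.card F + 1
  · exact small k s hk1 hk'
  -- Pass to complements, using that the elements of `F` sum to zero.
  obtain ⟨B, hB, hBs⟩ := small (Fintype.card F - k) (-s) (by omega) (by omega)
  refine ⟨Bᶜ, by rw [card_compl, hB]; omega, ?_⟩
  have htot := sum_add_sum_compl B fun a => a
  rw [sum_univ_eq_zero_of_odd_card hq, hBs] at htot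
  linear_combination htot

omit [Fintype F] [DecidableEq F] in
theorem eq_optionElim_of_mem_PRSCode {k : ℕ} {w : Option F → F} (hw : w ∈ PRSCode F k) :
    ∃ g : F[X], g.degree < k ∧ w = fun o => o.elim (g.coeff (k - 1)) fun a => g.eval a := by
  obtain ⟨g, hg, hsome, hnone⟩ := hw
  refine ⟨g, hg, funext fun o => ?_⟩
  cases o <;> simp [hsome, hnone]

theorem card_sub_le_hammingDist_of_mem_PRSCode {k : ℕ} {f : F[X]} (hf : f.degree = k) (v : F)
    {w : Option F → F} (hw : w ∈ PRSCode F k) :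
    Fintype.card F - k ≤ hammingDist (fun o => o.elim v fun a => f.eval a) w := by
  obtain ⟨g, hg, rfl⟩ := eq_optionElim_of_mem_PRSCode hw
  have hfg : (f - g).degree = k := by rw [degree_sub_eq_left_of_degree_lt (hf ▸ hg), hf]
  have hfg0 : f - g ≠ 0 := by rintro h; simp [h] at hfg
  calc Fintype.card F - k = Fintype.card F - (f - g).natDegree := by
        rw [natDegree_eq_of_degree_eq_some hfg]
    _ ≤ hammingNorm fun a => (f - g).eval a := card_sub_natDegree_le_hammingNorm_eval hfg0
    _ ≤ _ := by
      rw [hammingDist_optionElim, hammingDist_eval_eq_hammingNorm_eval_sub]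
      exact Nat.le_add_left _ _

theorem exists_mem_PRSCode_hammingDist_eq (hq : Odd (Fintype.card F)) {k : ℕ} (hk1 : 1 ≤ k)
    (hk : k ≤ Fintype.card F - 1) {f : F[X]} (hf : f.degree = k) (v : F) :
    ∃ w ∈ PRSCode F k, hammingDist (fun o => o.elim v fun a => f.eval a) w = Fintype.card F - k := by
  have hf0 : f ≠ 0 := by rintro rfl; simp at hf
  set c := f.leadingCoeff
  have hc : c ≠ 0 := leadingCoeff_ne_zero.2 hf0
  obtain ⟨A, hA, hAs⟩ := exists_card_eq_sum_eq hq hk1 hk ((v - f.coeff (k - 1)) / c)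
  set P := ∏ a ∈ A, (X - C a)
  set g := f - C c * P
  have hcP : (C c * P).degree = k := by
    rw [degree_C_mul hc, degree_prod]
    simp [hA]
  have hg : g.degree < k := by
    refine hf ▸ degree_sub_lt_left (hf.trans hcP.symm) hf0 ?_
    have hP : P.Monic := monic_prod_X_sub_C _ _
    rw [leadingCoeff_mul, leadingCoeff_C, hP.leadingCoeff, mul_one]
  have hgk : g.coeff (k - 1) = v := by
    have hP : P.coeff (k - 1) = -∑ a ∈ A, a := hA ▸ prod_X_sub_C_coeff_card_pred A id (by omega)
    simp only [g, coeff_sub, coeff_C_mul, hP, hAs]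
    field_simp
    ring
  refine ⟨fun o => o.elim (g.coeff (k - 1)) fun a => g.eval a, ⟨g, hg, fun a => rfl, rfl⟩, ?_⟩
  rw [hammingDist_optionElim, hammingDist_eval_eq_hammingNorm_eval_sub, hgk, if_pos rfl,
    zero_add, sub_sub_cancel, hammingNorm_eval_C_mul_prod_X_sub_C hc, hA]

end FiniteField

/-- For `deg f = k`, the word `(u_f, v)` has error distance exactly `q - k` to `PRS(q+1,k)`. -/
theorem prs_errDist_deg_k {F : Type*} [Field F] [Fintype F] [DecidableEq F] {k : ℕ}
    (hq : Odd (Fintype.card F)) (hk2 : 2 ≤ k) (hk : k ≤ Fintype.card F - 1)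
    (f : F[X]) (hf : f.natDegree = k) (v : F) :
    errDist (PRSCode F k) (fun o => o.elim v (fun a => f.eval a)) =
      Fintype.card F - k := by
  have hdeg : f.degree = k := by
    rw [degree_eq_natDegree (by rintro rfl; simp at hf; omega), hf]
  obtain ⟨w, hw, hdist⟩ := exists_mem_PRSCode_hammingDist_eq hq (by omega) hk hdeg v
  exact errDist_eq_of_mem_of_forall_le hw hdist fun w' hw' =>
    card_sub_le_hammingDist_of_mem_PRSCode hdeg v hw'
end

section
/- Let q be odd and 2 ≤ k ≤ q-2. The covering radius ρ of PRS(q+1,k) satisfies q - k ≤ ρ ≤ q - k + 1. -/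
open Polynomial

/-! The finite part of a codeword of `PRS(q+1,k)` is the evaluation vector of a polynomial of
degree `< k`. A word whose finite part is `a ↦ a ^ k` agrees with such an evaluation vector at
most at the `k` roots of `X ^ k - g`, which gives the lower bound. Conversely, Lagrange
interpolation at `min k q` points matches any word on those points, so at most `q - k` finite
coordinates and the point at infinity can disagree, which gives the upper bound. -/

open Finset

section CoveringRadius

variable {ι F : Type*} [Fintype ι] [DecidableEq F] {C : Set (ι → F)} {u c : ι → F} {n : ℕ}

theorem errDist_le_hammingDist (hc : c ∈ C) : errDist C u ≤ hammingDist u c :=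
  Nat.sInf_le ⟨c, hc, rfl⟩

theorem le_errDist (hC : C.Nonempty) (h : ∀ c ∈ C, n ≤ hammingDist u c) : n ≤ errDist C u :=
  le_csInf (hC.image _) (by rintro _ ⟨c, hc, rfl⟩; exact h c hc)

variable (C u) in
theorem errDist_le_card : errDist C u ≤ Fintype.card ι := by
  rcases C.eq_empty_or_nonempty with rfl | ⟨c, hc⟩
  · simp [errDist]
  · exact (errDist_le_hammingDist hc).trans hammingDist_le_card_fintype

variable (C u) in
theorem errDist_le_covRad : errDist C u ≤ covRad C :=
  le_csSup ⟨Fintype.card ι, by rintro _ ⟨v, rfl⟩; exact errDist_le_card C v⟩ ⟨u, rfl⟩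

theorem covRad_le (h : ∀ u, errDist C u ≤ n) : covRad C ≤ n :=
  csSup_le' (by rintro _ ⟨u, rfl⟩; exact h u)

end CoveringRadius

section Option

variable {α β : Type*} [Fintype α] [DecidableEq β]

theorem hammingDist_option (u v : Option α → β) :
    hammingDist u v = hammingDist (fun a => u (some a)) (fun a => v (some a)) +
      if u none = v none then 0 else 1 := by
  simp only [hammingDist, card_filter, Fintype.sum_option, ite_not]
  omega

end Option

section EvaluationVectors

variable {F : Type*} [Field F] [Fintype F] [DecidableEq F]

theorem card_sub_natDegree_le_hammingDist_eval {p r : F[X]} (h : p ≠ r) :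
    Fintype.card F - (p - r).natDegree ≤ hammingDist (fun a => p.eval a) (fun a => r.eval a) := by
  have hagree : #{a | p.eval a = r.eval a} ≤ (p - r).natDegree := by
    refine card_le_degree_of_subset_roots fun a ha => ?_
    rw [mem_roots (sub_ne_zero.mpr h), IsRoot, eval_sub, sub_eq_zero]
    simpa using ha
  have hsplit := card_filter_add_card_filter_not (s := univ) (fun a => p.eval a = r.eval a)
  rw [card_univ] at hsplit
  show _ ≤ #{a | ¬p.eval a = r.eval a}
  omega

theorem exists_degree_lt_hammingDist_eval_le (v : F → F) (k : ℕ) :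
    ∃ g : F[X], g.degree < k ∧ hammingDist v (fun a => g.eval a) ≤ Fintype.card F - k := by
  obtain ⟨s, -, hs⟩ := exists_subset_card_eq (s := (univ : Finset F)) (n := min k (Fintype.card F))
    (by simp [card_univ])
  have hinj : Set.InjOn (id : F → F) s := Function.injective_id.injOn
  refine ⟨Lagrange.interpolate s id v, ?_, ?_⟩
  · refine (Lagrange.degree_interpolate_lt v hinj).trans_le ?_
    exact_mod_cast hs.trans_le (min_le_left _ _)
  · have hdisagree : ({a | v a ≠ (Lagrange.interpolate s id v).eval a} : Finset F) ⊆ sᶜ :=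
      fun a ha => mem_compl.mpr fun has =>
        (mem_filter.mp ha).2 (Lagrange.eval_interpolate_at_node v hinj has).symm
    have := card_le_card hdisagree
    rw [card_compl, hs] at this
    show #{a | v a ≠ (Lagrange.interpolate s id v).eval a} ≤ _
    omega

end EvaluationVectors

section ProjectiveReedSolomon

theorem zero_mem_PRSCode {F : Type*} [Field F] {k : ℕ} : (0 : Option F → F) ∈ PRSCode F k :=
  ⟨0, by simp [bot_lt_iff_ne_bot], by simp, by simp⟩

variable {F : Type*} [Field F] [Fintype F] [DecidableEq F] {k : ℕ}

theorem errDist_PRSCode_le (w : Option F → F) :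
    errDist (PRSCode F k) w ≤ Fintype.card F - k + 1 := by
  obtain ⟨g, hg, hdist⟩ := exists_degree_lt_hammingDist_eval_le (fun a => w (some a)) k
  have hmem : (fun i => i.elim (g.coeff (k - 1)) g.eval) ∈ PRSCode F k :=
    ⟨g, hg, fun _ => rfl, rfl⟩
  refine (errDist_le_hammingDist hmem).trans ?_
  rw [hammingDist_option]
  simp only [Option.elim_some]
  split_ifs <;> omega

variable (k) in
theorem card_sub_le_errDist_PRSCode :
    Fintype.card F - k ≤ errDist (PRSCode F k) (fun i => i.elim 0 (· ^ k)) := by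
  refine le_errDist ⟨0, zero_mem_PRSCode⟩ ?_
  rintro c ⟨g, hg, hc, -⟩
  have hdeg : (X ^ k - g).natDegree = k :=
    natDegree_eq_of_degree_eq_some (by rw [degree_sub_eq_left_of_degree_lt (by simpa using hg),
      degree_X_pow])
  have hne : (X ^ k : F[X]) ≠ g := fun h => by simp [← h] at hg
  calc Fintype.card F - k
      = Fintype.card F - (X ^ k - g).natDegree := by rw [hdeg]
    _ ≤ hammingDist (fun a => (X ^ k : F[X]).eval a) (fun a => g.eval a) :=
        card_sub_natDegree_le_hammingDist_eval hne
    _ ≤ hammingDist (fun i => i.elim 0 (· ^ k)) c := by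
        rw [hammingDist_option]
        simp only [eval_pow, eval_X, hc, Option.elim_some]
        omega

end ProjectiveReedSolomon

theorem prs_covRad_bounds_general {F : Type*} [Field F] [Fintype F] [DecidableEq F] {k : ℕ} :
    Fintype.card F - k ≤ covRad (PRSCode F k) ∧
      covRad (PRSCode F k) ≤ Fintype.card F - k + 1 :=
  ⟨(card_sub_le_errDist_PRSCode k).trans (errDist_le_covRad _ _), covRad_le errDist_PRSCode_le⟩

/-- For odd `q` and `2 ≤ k ≤ q-2`, the covering radius `ρ` of `PRS(q+1,k)` satisfies
`q - k ≤ ρ ≤ q - k + 1`. -/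
theorem prs_covRad_bounds {F : Type*} [Field F] [Fintype F] [DecidableEq F] {k : ℕ}
    (hq : Odd (Fintype.card F)) (hk2 : 2 ≤ k) (hk : k ≤ Fintype.card F - 2) :
    Fintype.card F - k ≤ covRad (PRSCode F k) ∧
      covRad (PRSCode F k) ≤ Fintype.card F - k + 1 :=
  prs_covRad_bounds_general
end
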